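/- arXiv:1109.3929 — 2 statements merged into one kernel-verified Lean document; each statement's English description precedes it below -/
import Mathlib

section
/- Let D be a minimum total dominating set of G_{n,3} (n ≥ 2) and let Y_1 = {x_{1j} : 1 ≤ j ≤ 3} and Y_n = {x_{nj} : 1 ≤ j ≤ 3} be the first and last columns. Then |D ∩ Y_1| ≤ 2 and |D ∩ Y_n| ≤ 2. -/
open SimpleGraph

/-- The grid graph `G_{n,m}`, the Cartesian (box) product of paths `P_n` and `P_m`. -/
def gridGraph (n m : ℕ) : SimpleGraph (Fin n × Fin m) :=
  (pathGraph n) □ (pathGraph m)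

/-- `D` is a total dominating set of `G`: every vertex has a neighbor in `D`. -/
def IsTotalDomSet {V : Type*} (G : SimpleGraph V) (D : Set V) : Prop :=
  ∀ v : V, ∃ u ∈ D, G.Adj v u

/-- The total domination number of `G`. -/
noncomputable def totalDomNum {V : Type*} [Fintype V] (G : SimpleGraph V) : ℕ :=
  sInf {k | ∃ D : Finset V, IsTotalDomSet G ↑D ∧ D.card = k}

/-- The total bondage number: the least number of edges whose removal increases
the total domination number. -/
noncomputable def totalBondage {V : Type*} [Fintype V] (G : SimpleGraph V) : ℕ :=
  sInf {k | ∃ F : Finset (Sym2 V), ↑F ⊆ G.edgeSet ∧ F.card = k ∧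
    totalDomNum (G.deleteEdges ↑F) > totalDomNum G}


/-!
If a total dominating set `D` of `G` contains two vertices `u ≠ w` and some vertex `z` is adjacent
to every neighbour of `u` and of `w`, then swapping `u, w` for `z` gives a smaller total
dominating set. In `G □ P₃`, the two corners `(a, 0)`, `(a, 2)` of the column over a leaf `a` of
`G` with neighbour `b` are such a pair, with `z = (b, 1)`. Hence a minimum total dominating set of
`G_{n,3}` never contains both corners of an end column.
-/

open Finset

section TotalDomination

variable {V : Type*} {G : SimpleGraph V}

theorem totalDomNum_le_card [Fintype V] {D : Finset V} (hD : IsTotalDomSet G ↑D) :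
    totalDomNum G ≤ D.card :=
  Nat.sInf_le ⟨D, hD, rfl⟩

theorem IsTotalDomSet.insert_erase_erase [DecidableEq V] {D : Finset V}
    (hD : IsTotalDomSet G ↑D) {u w z : V}
    (hz : ∀ v, G.Adj v u ∨ G.Adj v w → G.Adj v z) :
    IsTotalDomSet G ↑(insert z ((D.erase u).erase w)) := by
  intro v
  obtain ⟨x, hxD, hvx⟩ := hD v
  by_cases hx : x = u ∨ x = w
  · refine ⟨z, by simp, hz v ?_⟩
    rcases hx with rfl | rfl
    exacts [Or.inl hvx, Or.inr hvx]
  · push Not at hx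
    exact ⟨x, by simp [hx.1, hx.2, hxD], hvx⟩

theorem totalDomNum_lt_card [Fintype V] [DecidableEq V] {D : Finset V}
    (hD : IsTotalDomSet G ↑D) {u w z : V} (hu : u ∈ D) (hw : w ∈ D) (huw : u ≠ w)
    (hz : ∀ v, G.Adj v u ∨ G.Adj v w → G.Adj v z) :
    totalDomNum G < D.card := by
  have hw' : w ∈ D.erase u := mem_erase.2 ⟨huw.symm, hw⟩
  calc totalDomNum G ≤ (insert z ((D.erase u).erase w)).card :=
        totalDomNum_le_card (hD.insert_erase_erase hz)
    _ ≤ ((D.erase u).erase w).card + 1 := card_insert_le _ _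
    _ < D.card := by
        rw [card_erase_of_mem hw', card_erase_of_mem hu]
        have : 1 < D.card := one_lt_card.2 ⟨u, hu, w, hw, huw⟩
        omega

end TotalDomination

section BoxPathThree

variable {α : Type*} {G : SimpleGraph α}

theorem boxProd_pathGraph_three_adj_of_adj_corner {a b : α} (hab : ∀ c, G.Adj c a ↔ c = b)
    {v : α × Fin 3} (hv : (G □ pathGraph 3).Adj v (a, 0) ∨ (G □ pathGraph 3).Adj v (a, 2)) :
    (G □ pathGraph 3).Adj v (b, 1) := by
  have hab' : G.Adj a b := ((hab b).2 rfl).symm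
  obtain ⟨v₁, v₂⟩ := v
  fin_cases v₂ <;> simp_all [pathGraph_adj]

theorem card_filter_fst_eq_le_two [DecidableEq α] {D : Finset (α × Fin 3)} {a : α}
    (h : ¬((a, 0) ∈ D ∧ (a, 2) ∈ D)) : (D.filter (·.1 = a)).card ≤ 2 := by
  by_contra! hcard
  have hcol : D.filter (·.1 = a) = univ.image (a, ·) := by
    refine eq_of_subset_of_card_le (fun v hv => ?_) ?_
    · obtain ⟨-, hva⟩ := mem_filter.1 hv
      exact mem_image.2 ⟨v.2, mem_univ _, by rw [← hva]⟩
    · rw [card_image_of_injective _ (Prod.mk_right_injective a)]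
      simpa [Nat.lt_iff_add_one_le] using hcard
  have hmem (j : Fin 3) : (a, j) ∈ D :=
    (mem_filter.1 (hcol ▸ mem_image_of_mem _ (mem_univ j))).1
  exact h ⟨hmem 0, hmem 2⟩

theorem card_filter_fst_eq_le_two_of_card_eq_totalDomNum [Fintype α] [DecidableEq α]
    {D : Finset (α × Fin 3)} (hD : IsTotalDomSet (G □ pathGraph 3) ↑D)
    (hmin : D.card = totalDomNum (G □ pathGraph 3)) {a b : α} (hab : ∀ c, G.Adj c a ↔ c = b) :
    (D.filter (·.1 = a)).card ≤ 2 :=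
  card_filter_fst_eq_le_two fun ⟨h0, h2⟩ =>
    (totalDomNum_lt_card hD h0 h2 (by simp)
      fun _ hv => boxProd_pathGraph_three_adj_of_adj_corner hab hv).ne' hmin

end BoxPathThree

theorem pathGraph_adj_zero_iff {n : ℕ} (hn : 1 < n) (c : Fin n) :
    (pathGraph n).Adj c ⟨0, by omega⟩ ↔ c = ⟨1, hn⟩ := by
  simp only [pathGraph_adj, Fin.ext_iff]
  omega

theorem pathGraph_adj_last_iff {n : ℕ} (hn : 1 < n) (c : Fin n) :
    (pathGraph n).Adj c ⟨n - 1, by omega⟩ ↔ c = ⟨n - 2, by omega⟩ := by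
  simp only [pathGraph_adj, Fin.ext_iff]
  omega

theorem grid_three_min_tds_columns (n : ℕ) (hn : 2 ≤ n) (D : Finset (Fin n × Fin 3))
    (hD : IsTotalDomSet (gridGraph n 3) ↑D) (hmin : D.card = totalDomNum (gridGraph n 3)) :
    (D.filter (fun v => v.1.val = 0)).card ≤ 2 ∧
    (D.filter (fun v => v.1.val = n - 1)).card ≤ 2 := by
  have hcol {a b : Fin n} (hab : ∀ c, (pathGraph n).Adj c a ↔ c = b) :
      (D.filter fun v => v.1.val = a.val).card ≤ 2 := by
    simpa only [Fin.val_inj] using card_filter_fst_eq_le_two_of_card_eq_totalDomNum hD hmin hab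
  exact ⟨hcol (pathGraph_adj_zero_iff hn), hcol (pathGraph_adj_last_iff hn)⟩
end

section
/- For every n ≥ 2, removing the single edge x_{(n−1)2}x_{n2} from G_{n,3} increases the total domination number; hence b_t(G_{n,3}) = 1. -/
open SimpleGraph

/-!
Each of the `2n` vertices in the outer columns of `P_n □ P_3` needs a neighbour in a total
dominating set `D`, and every vertex has at most two outer neighbours, so `2n ≤ 2|D|`; the middle
column shows that `n` is attained. Once the edge between the last two middle vertices is deleted,
the last middle vertex can only be dominated by an outer vertex of the last row, which has a single
outer neighbour, so `2n < 2|D|`. Since deleting no edge changes nothing, one edge is the minimum.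
-/

open Finset

namespace IsTotalDomSet

variable {V : Type*} {G H : SimpleGraph V} {D : Finset V}

theorem mono (hD : IsTotalDomSet H ↑D) (hHG : H ≤ G) : IsTotalDomSet G ↑D := fun v ↦
  let ⟨u, hu, hvu⟩ := hD v
  ⟨u, hu, hHG hvu⟩

variable [DecidableEq V] [DecidableRel G.Adj]

theorem card_le_sum (hD : IsTotalDomSet G ↑D) (S : Finset V) :
    #S ≤ ∑ u ∈ D, #{v ∈ S | G.Adj v u} := by
  calc #S ≤ #(D.biUnion fun u ↦ {v ∈ S | G.Adj v u}) := by
        refine card_le_card fun v hv ↦ ?_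
        obtain ⟨u, hu, hvu⟩ := hD v
        exact mem_biUnion.2 ⟨u, hu, mem_filter.2 ⟨hv, hvu⟩⟩
    _ ≤ _ := card_biUnion_le

theorem card_le_mul (hD : IsTotalDomSet G ↑D) (S : Finset V) {c : ℕ}
    (hc : ∀ u, #{v ∈ S | G.Adj v u} ≤ c) : #S ≤ c * #D := by
  calc #S ≤ ∑ u ∈ D, #{v ∈ S | G.Adj v u} := hD.card_le_sum S
    _ ≤ #D • c := sum_le_card_nsmul _ _ _ fun u _ ↦ hc u
    _ = c * #D := by rw [smul_eq_mul, mul_comm]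

theorem card_lt_mul (hD : IsTotalDomSet G ↑D) (S : Finset V) {c : ℕ}
    (hc : ∀ u, #{v ∈ S | G.Adj v u} ≤ c) {u₀ : V} (hu₀ : u₀ ∈ D)
    (hcu₀ : #{v ∈ S | G.Adj v u₀} < c) : #S < c * #D := by
  have hrest : ∑ u ∈ D.erase u₀, #{v ∈ S | G.Adj v u} ≤ c * (#D - 1) := by
    rw [← card_erase_of_mem hu₀, mul_comm, ← smul_eq_mul]
    exact sum_le_card_nsmul _ _ _ fun u _ ↦ hc u
  have hDpos : 1 ≤ #D := card_pos.2 ⟨u₀, hu₀⟩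
  calc #S ≤ ∑ u ∈ D, #{v ∈ S | G.Adj v u} := hD.card_le_sum S
    _ = #{v ∈ S | G.Adj v u₀} + ∑ u ∈ D.erase u₀, #{v ∈ S | G.Adj v u} :=
        (add_sum_erase D _ hu₀).symm
    _ < c + c * (#D - 1) := by omega
    _ = c * #D := by rw [add_comm, ← mul_add_one, Nat.sub_add_cancel hDpos]

end IsTotalDomSet

section TotalDomNum

variable {V : Type*} [Fintype V] {G : SimpleGraph V}

theorem totalDomNum_le {D : Finset V} (hD : IsTotalDomSet G ↑D) : totalDomNum G ≤ #D :=
  Nat.sInf_le ⟨D, hD, rfl⟩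

theorem le_totalDomNum {k : ℕ} (hex : ∃ D : Finset V, IsTotalDomSet G ↑D)
    (hk : ∀ D : Finset V, IsTotalDomSet G ↑D → k ≤ #D) : k ≤ totalDomNum G := by
  obtain ⟨D, hD⟩ := hex
  exact le_csInf ⟨_, D, hD, rfl⟩ fun _ ⟨D, hD, hDk⟩ ↦ hDk ▸ hk D hD

theorem totalBondage_eq_one {e : Sym2 V} (he : e ∈ G.edgeSet)
    (hlt : totalDomNum G < totalDomNum (G.deleteEdges {e})) : totalBondage G = 1 := by
  have hone : 1 ∈ {k | ∃ F : Finset (Sym2 V), ↑F ⊆ G.edgeSet ∧ #F = k ∧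
      totalDomNum (G.deleteEdges ↑F) > totalDomNum G} :=
    ⟨{e}, by simpa using he, card_singleton e, by simpa using hlt⟩
  refine le_antisymm (Nat.sInf_le hone) (Nat.one_le_iff_ne_zero.2 fun h0 ↦ ?_)
  obtain ⟨F, -, hF, hgt⟩ : totalBondage G ∈ _ := Nat.sInf_mem ⟨1, hone⟩
  rw [h0, card_eq_zero] at hF
  rw [hF, coe_empty, deleteEdges_empty] at hgt
  exact hgt.false

end TotalDomNum

section Grid

variable {n : ℕ}

theorem gridGraph_adj {m : ℕ} {v u : Fin n × Fin m} :
    (gridGraph n m).Adj v u ↔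
      (((v.1 : ℕ) + 1 = u.1 ∨ (u.1 : ℕ) + 1 = v.1) ∧ (v.2 : ℕ) = u.2) ∨
      (((v.2 : ℕ) + 1 = u.2 ∨ (u.2 : ℕ) + 1 = v.2) ∧ (v.1 : ℕ) = u.1) := by
  simp [gridGraph, boxProd_adj, pathGraph_adj, Fin.ext_iff]

instance {m : ℕ} : DecidableRel (gridGraph n m).Adj := fun _ _ ↦
  decidable_of_iff _ gridGraph_adj.symm

def gridOuter (n : ℕ) : Finset (Fin n × Fin 3) := univ ×ˢ {0, 2}

theorem mem_gridOuter {v : Fin n × Fin 3} : v ∈ gridOuter n ↔ (v.2 : ℕ) ≠ 1 := by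
  obtain ⟨i, j⟩ := v
  fin_cases j <;> simp [gridOuter]

theorem card_gridOuter : #(gridOuter n) = 2 * n := by
  simp [gridOuter, mul_comm]

theorem card_gridOuter_adj_le {u : Fin n × Fin 3} {t : Finset ℕ}
    (ht : ∀ v : Fin n × Fin 3, (v.2 : ℕ) ≠ 1 → (gridGraph n 3).Adj v u → (v.1 : ℕ) + v.2 ∈ t) :
    #{v ∈ gridOuter n | (gridGraph n 3).Adj v u} ≤ #t := by
  -- no two outer neighbours of a vertex have the same coordinate sum
  refine card_le_card_of_injOn (fun v ↦ (v.1 : ℕ) + v.2) (fun v hv ↦ ?_) fun v hv w hw hvw ↦ ?_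
  · rw [coe_filter, Set.mem_ofPred_eq, mem_gridOuter] at hv
    exact ht v hv.1 hv.2
  · rw [coe_filter, Set.mem_ofPred_eq, mem_gridOuter, gridGraph_adj] at hv hw
    have := u.2.isLt
    dsimp only at hvw
    simp only [Prod.ext_iff, Fin.ext_iff]
    omega

theorem card_gridOuter_adj_le_two (u : Fin n × Fin 3) :
    #{v ∈ gridOuter n | (gridGraph n 3).Adj v u} ≤ 2 := by
  refine (card_gridOuter_adj_le (t := {(u.1 : ℕ) + (u.2 : ℕ) - 1, (u.1 : ℕ) + (u.2 : ℕ) + 1})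
    fun v hv hvu ↦ ?_).trans card_le_two
  rw [gridGraph_adj] at hvu
  simp only [mem_insert, mem_singleton]
  omega

theorem card_gridOuter_adj_le_one {u : Fin n × Fin 3} (hu₁ : (u.1 : ℕ) + 1 = n)
    (hu₂ : (u.2 : ℕ) ≠ 1) : #{v ∈ gridOuter n | (gridGraph n 3).Adj v u} ≤ 1 := by
  refine (card_gridOuter_adj_le (t := {(u.1 : ℕ) + u.2 - 1}) fun v hv hvu ↦ ?_).trans
    (card_singleton _).le
  rw [gridGraph_adj] at hvu
  have := v.1.isLt
  have := v.2.isLt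
  rw [mem_singleton]
  omega

def gridMiddle (n : ℕ) : Finset (Fin n × Fin 3) := univ ×ˢ {1}

theorem card_gridMiddle : #(gridMiddle n) = n := by
  simp [gridMiddle]

theorem isTotalDomSet_gridMiddle (hn : 2 ≤ n) :
    IsTotalDomSet (gridGraph n 3) ↑(gridMiddle n) := by
  intro v
  have := v.1.isLt
  by_cases hv : (v.2 : ℕ) = 1
  · refine ⟨(⟨if (v.1 : ℕ) = 0 then 1 else v.1 - 1, by split_ifs <;> omega⟩, 1),
      by simp [gridMiddle], ?_⟩
    rw [gridGraph_adj]
    split_ifs <;> simp <;> omega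
  · have := v.2.isLt
    exact ⟨(v.1, 1), by simp [gridMiddle], by rw [gridGraph_adj]; simp; omega⟩

theorem isTotalDomSet_univ_gridGraph_deleteEdges {a b : Fin n × Fin 3} (ha : a.2 = 1)
    (hb : b.2 = 1) :
    IsTotalDomSet ((gridGraph n 3).deleteEdges {s(a, b)}) ↑(univ : Finset (Fin n × Fin 3)) := by
  intro v
  refine ⟨(v.1, if v.2 = 1 then 0 else 1), by simp, ?_⟩
  have := v.2.isLt
  rw [deleteEdges_adj, gridGraph_adj, Set.mem_singleton_iff, Sym2.eq_iff]
  simp only [Prod.ext_iff, Fin.ext_iff, ha, hb]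
  split_ifs with hv <;> simp only [Fin.val_zero, Fin.val_one, and_true] at hv ⊢ <;> omega

theorem le_card_of_isTotalDomSet_gridGraph {D : Finset (Fin n × Fin 3)}
    (hD : IsTotalDomSet (gridGraph n 3) ↑D) : n ≤ #D := by
  have := hD.card_le_mul (gridOuter n) card_gridOuter_adj_le_two
  rw [card_gridOuter] at this
  omega

theorem lt_card_of_isTotalDomSet_gridGraph_deleteEdges {a b : Fin n × Fin 3}
    (hab : (a.1 : ℕ) + 1 = b.1) (ha : (a.2 : ℕ) = 1) (hb₁ : (b.1 : ℕ) + 1 = n) (hb₂ : (b.2 : ℕ) = 1)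
    {D : Finset (Fin n × Fin 3)} (hD : IsTotalDomSet ((gridGraph n 3).deleteEdges {s(a, b)}) ↑D) :
    n < #D := by
  obtain ⟨u₀, hu₀D, hbu₀⟩ := hD b
  rw [deleteEdges_adj, Set.mem_singleton_iff] at hbu₀
  have hu₀a : u₀ ≠ a := by
    rintro rfl
    exact hbu₀.2 Sym2.eq_swap
  have hu₀ : (u₀.1 : ℕ) + 1 = n ∧ (u₀.2 : ℕ) ≠ 1 := by
    have hadj := hbu₀.1
    rw [gridGraph_adj] at hadj
    rw [Ne, Prod.ext_iff, Fin.ext_iff, Fin.ext_iff] at hu₀a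
    omega
  have := (hD.mono (deleteEdges_le _)).card_lt_mul (gridOuter n) card_gridOuter_adj_le_two hu₀D
    ((card_gridOuter_adj_le_one hu₀.1 hu₀.2).trans_lt one_lt_two)
  rw [card_gridOuter] at this
  omega

end Grid

theorem total_bondage_grid_three (n : ℕ) (hn : 2 ≤ n) :
    totalDomNum ((gridGraph n 3).deleteEdges
        {s(((⟨n - 2, by omega⟩ : Fin n), (1 : Fin 3)), ((⟨n - 1, by omega⟩ : Fin n), (1 : Fin 3)))})
      > totalDomNum (gridGraph n 3) ∧
    totalBondage (gridGraph n 3) = 1 := by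
  have hγ : totalDomNum (gridGraph n 3) = n :=
    le_antisymm ((totalDomNum_le (isTotalDomSet_gridMiddle hn)).trans_eq card_gridMiddle)
      (le_totalDomNum ⟨_, isTotalDomSet_gridMiddle hn⟩ fun _ ↦ le_card_of_isTotalDomSet_gridGraph)
  have hlt : totalDomNum (gridGraph n 3) < totalDomNum ((gridGraph n 3).deleteEdges
      {s(((⟨n - 2, by omega⟩ : Fin n), (1 : Fin 3)),
        ((⟨n - 1, by omega⟩ : Fin n), (1 : Fin 3)))}) :=
    hγ.trans_lt <| le_totalDomNum ⟨univ, isTotalDomSet_univ_gridGraph_deleteEdges rfl rfl⟩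
      fun _ hD ↦
        lt_card_of_isTotalDomSet_gridGraph_deleteEdges (by simp; omega) rfl (by simp; omega) rfl hD
  exact ⟨hlt, totalBondage_eq_one (by rw [mem_edgeSet, gridGraph_adj]; simp; omega) hlt⟩
end
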